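/- Let G be a D-regular Bonnet-Myers sharp graph of diameter L, x_0 a pole, and y a vertex with d(x_0, y) = k. Then d⁺(y) − d⁻(y) = D(1 − 2k/L), where d⁻(y), d⁺(y) denote the number of neighbors of y at distance k−1, respectively k+1, from x_0. -/

import Mathlib

/-!
Write `Δ_w(z) = d⁺(z) - d⁻(z)` for the spheres around `w`. The mean of `d(w, ·)` under `μ_z` is
`d(w, z) + Δ_w(z) / (D + 1)`, so testing the Wasserstein distance of an edge `u ~ v` against the
1-Lipschitz function `d(w, ·)` and using the curvature bound `W₁ ≤ 1 - 2D / (L(D + 1))` that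
Bonnet–Myers sharpness gives on every edge, `Δ_w` drops by at least `2D / L` from `u` to `v`
whenever `d(w, v) = d(w, u) + 1`. Starting from `Δ_w(w) = D`, this yields
`Δ_w(v) ≤ D(1 - 2 d(w, v) / L)` everywhere. Since `Δ_w` sums to zero over the graph, the total
slack in this inequality is `∑_v D(1 - 2 d(w, v) / L)`. For `w = x₀` and a vertex `p` at
distance `L` from `x₀` the two totals add up to at most `0`, because `d(x₀, v) + d(p, v) ≥ L`;
so all the slack at `x₀` vanishes.
-/

open Finset

namespace BMS

open scoped Classical

variable {V : Type*}

/-- The uniform probability measure on the closed 1-ball of `x` in a `D`-regular graph. -/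
noncomputable def mu (G : SimpleGraph V) (D : ℕ) (x : V) : V → ℝ :=
  fun v => if G.dist x v ≤ 1 then 1 / (D + 1) else 0

/-- The L¹-Wasserstein distance between `μ_x` and `μ_y`, as an infimum over transport plans. -/
noncomputable def W1 (G : SimpleGraph V) [Fintype V] (D : ℕ) (x y : V) : ℝ :=
  sInf { c : ℝ | ∃ π : V → V → ℝ,
    (∀ u v, 0 ≤ π u v) ∧
    (∀ u, ∑ v, π u v = mu G D x u) ∧
    (∀ v, ∑ u, π u v = mu G D y v) ∧
    c = ∑ u, ∑ v, (G.dist u v : ℝ) * π u v }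

/-- Ollivier Ricci curvature (Lin–Lu–Yau normalization for regular graphs). -/
noncomputable def kappa (G : SimpleGraph V) [Fintype V] (D : ℕ) (x y : V) : ℝ :=
  ((D + 1) / D) * (1 - W1 G D x y)

/-- `G` is Bonnet–Myers sharp: the infimum of the curvature over edges equals `2 / L`. -/
def BMSharp (G : SimpleGraph V) [Fintype V] (D L : ℕ) : Prop :=
  sInf { k : ℝ | ∃ x y, G.Adj x y ∧ k = kappa G D x y } = 2 / (L : ℝ)

/-- Number of neighbors of `y` at distance `k` from `x0`. -/
noncomputable def sphDeg (G : SimpleGraph V) [Fintype V] (x0 y : V) (k : ℕ) : ℕ :=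
  (Finset.univ.filter (fun v => G.Adj y v ∧ G.dist x0 v = k)).card

/-- Number of triangles containing the edge `x ~ y` (common neighbors of `x` and `y`). -/
noncomputable def tri (G : SimpleGraph V) [Fintype V] (x y : V) : ℕ :=
  (Finset.univ.filter (fun v => G.Adj x v ∧ G.Adj y v)).card

/-- A good optimal transport map from `B_1(a)` to `B_1(b)`: a bijection between the 1-balls,
fixing exactly the vertices of `B_1(a) ∩ B_1(b)` (among the domain), whose cost realizes
the Wasserstein distance `W1 (μ_a, μ_b)`. -/
def goodMap (G : SimpleGraph V) [Fintype V] (D : ℕ) (a b : V) (T : V → V) : Prop :=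
  Set.BijOn T {v | G.dist a v ≤ 1} {v | G.dist b v ≤ 1} ∧
  (∀ v, G.dist a v ≤ 1 → (T v = v ↔ G.dist b v ≤ 1)) ∧
  (1 / (D + 1 : ℝ)) *
      ∑ v ∈ Finset.univ.filter (fun v => G.dist a v ≤ 1), (G.dist v (T v) : ℝ) =
    W1 G D a b


noncomputable def sphDegDiff (G : SimpleGraph V) [Fintype V] (w z : V) : ℝ :=
  (sphDeg G w z (G.dist w z + 1) : ℝ) - (sphDeg G w z (G.dist w z - 1) : ℝ)

section

variable {G : SimpleGraph V} {D L : ℕ}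

lemma mu_nonneg (z v : V) : 0 ≤ mu G D z v := by
  unfold mu; positivity

lemma dist_sub_dist_of_adj (hconn : G.Connected) (w : V) {z v : V} (hadj : G.Adj z v) :
    (G.dist w v : ℝ) - G.dist w z =
      (if G.dist w v = G.dist w z + 1 then 1 else 0) -
        (if G.dist w v = G.dist w z - 1 then 1 else 0) := by
  have hpos : G.dist w z ≠ 0 ∨ G.dist w v ≠ 0 := by
    by_contra! h
    rw [hconn.dist_eq_zero_iff, hconn.dist_eq_zero_iff] at h
    exact hadj.ne (h.1.symm.trans h.2)
  rcases hadj.diff_dist_adj (u := w) with h | h | h <;> rw [h]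
  · rw [if_neg (by omega), if_neg (by omega)]; simp
  · rw [if_pos rfl, if_neg (by omega)]; push_cast; ring
  · rw [if_neg (by omega), if_pos rfl, Nat.cast_sub (by omega)]; push_cast; ring

lemma exists_adj_dist_eq_of_dist_eq_succ (hconn : G.Connected) {w v : V} {m : ℕ}
    (h : G.dist w v = m + 1) : ∃ u, G.Adj u v ∧ G.dist w u = m := by
  obtain ⟨q, hq⟩ := hconn.exists_walk_length_eq_dist v w
  rw [G.dist_comm, h] at hq
  cases q with
  | nil => simp at hq
  | @cons _ u _ hadj q =>
    refine ⟨u, hadj.symm, le_antisymm ?_ ?_⟩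
    · have := G.dist_le q.reverse
      simp only [SimpleGraph.Walk.length_reverse, SimpleGraph.Walk.length_cons] at this hq
      omega
    · have := hconn.dist_triangle (u := w) (v := u) (w := v)
      rw [h, G.dist_eq_one_iff_adj.2 hadj.symm] at this
      omega

variable [Fintype V]

lemma filter_dist_le_one_eq_insert (hconn : G.Connected) (z : V) :
    univ.filter (fun v => G.dist z v ≤ 1) = insert z (G.neighborFinset z) := by
  ext v
  rcases eq_or_ne z v with rfl | hne
  · simp
  · simp [hne, hne.symm, Nat.le_one_iff_eq_zero_or_eq_one, hconn.dist_eq_zero_iff]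

lemma sum_mu (hconn : G.Connected) (hreg : G.IsRegularOfDegree D) (z : V) :
    ∑ v, mu G D z v = 1 := by
  simp only [mu]
  rw [← sum_filter, filter_dist_le_one_eq_insert hconn z, sum_const,
    card_insert_of_notMem (by simp), G.card_neighborFinset_eq_degree, hreg z, nsmul_eq_mul]
  push_cast
  field_simp

/-- Weak Kantorovich duality. -/
lemma sum_mul_mu_sub_le_W1 (hconn : G.Connected) (hreg : G.IsRegularOfDegree D) (x y : V)
    (f : V → ℝ) (hf : ∀ u v, f v - f u ≤ G.dist u v) :
    ∑ v, f v * mu G D y v - ∑ u, f u * mu G D x u ≤ W1 G D x y := by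
  apply le_csInf
  · refine ⟨_, fun u v => mu G D x u * mu G D y v,
      fun u v => mul_nonneg (mu_nonneg x u) (mu_nonneg y v), fun u => ?_, fun v => ?_, rfl⟩
    · rw [← mul_sum, sum_mu hconn hreg y, mul_one]
    · rw [← sum_mul, sum_mu hconn hreg x, one_mul]
  · rintro _ ⟨π, hπ, hx, hy, rfl⟩
    calc ∑ v, f v * mu G D y v - ∑ u, f u * mu G D x u
        = ∑ u, ∑ v, (f v - f u) * π u v := by
          simp only [sub_mul, sum_sub_distrib, ← hx, ← hy, mul_sum]
          rw [sum_comm (f := fun v u => f v * π u v)]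
      _ ≤ ∑ u, ∑ v, (G.dist u v : ℝ) * π u v :=
          sum_le_sum fun u _ => sum_le_sum fun v _ =>
            mul_le_mul_of_nonneg_right (hf u v) (hπ u v)

lemma sum_neighbor_dist_sub_dist (hconn : G.Connected) (w z : V) :
    ∑ v ∈ G.neighborFinset z, ((G.dist w v : ℝ) - G.dist w z) = sphDegDiff G w z := by
  rw [sum_congr rfl fun v hv => dist_sub_dist_of_adj hconn w ((G.mem_neighborFinset z v).1 hv),
    sum_sub_distrib, sum_boole, sum_boole, sphDegDiff, sphDeg, sphDeg, G.neighborFinset_eq_filter,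
    filter_filter, filter_filter]

lemma sum_dist_mul_mu (hconn : G.Connected) (hreg : G.IsRegularOfDegree D) (w z : V) :
    ∑ v, (G.dist w v : ℝ) * mu G D z v = G.dist w z + sphDegDiff G w z / (D + 1) := by
  have hnbr := sum_neighbor_dist_sub_dist hconn w z
  rw [sum_sub_distrib, sum_const, G.card_neighborFinset_eq_degree, hreg z, nsmul_eq_mul] at hnbr
  simp only [mu, mul_ite, mul_zero]
  rw [← sum_filter, filter_dist_le_one_eq_insert hconn z, sum_insert (by simp), ← sum_mul,
    ← hnbr]
  field_simp
  ring

lemma W1_le_of_BMSharp (hD : 0 < D) (hBM : BMSharp G D L) {a b : V} (hadj : G.Adj a b) :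
    W1 G D a b ≤ 1 - 2 * D / (L * (D + 1)) := by
  have hfin : {k : ℝ | ∃ x y, G.Adj x y ∧ k = kappa G D x y}.Finite :=
    (Set.finite_range fun p : V × V => kappa G D p.1 p.2).subset
      fun _ ⟨x, y, _, hk⟩ => ⟨(x, y), hk.symm⟩
  have hκ : 2 / (L : ℝ) ≤ kappa G D a b := hBM ▸ csInf_le hfin.bddBelow ⟨a, b, hadj, rfl⟩
  have hD' : (0 : ℝ) < D := by exact_mod_cast hD
  rw [kappa, ← div_le_iff₀' (by positivity)] at hκ
  calc W1 G D a b ≤ 1 - 2 / L / ((D + 1) / D) := by linarith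
    _ = 1 - 2 * D / (L * (D + 1)) := by field_simp

lemma sphDegDiff_le_sub_of_adj (hconn : G.Connected) (hreg : G.IsRegularOfDegree D)
    (hD : 0 < D) (hBM : BMSharp G D L) (w : V) {u v : V} (hadj : G.Adj u v)
    (hdist : G.dist w v = G.dist w u + 1) :
    sphDegDiff G w v ≤ sphDegDiff G w u - 2 * D / L := by
  have hlip : ∀ a b, (G.dist w b : ℝ) - G.dist w a ≤ G.dist a b := fun a b => by
    rw [sub_le_iff_le_add']
    exact_mod_cast hconn.dist_triangle
  have hgain := sum_mul_mu_sub_le_W1 hconn hreg u v _ hlip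
  rw [sum_dist_mul_mu hconn hreg, sum_dist_mul_mu hconn hreg, hdist] at hgain
  have hW := W1_le_of_BMSharp hD hBM hadj
  have hD1 : (0 : ℝ) < D + 1 := by positivity
  push_cast at hgain
  have hdrop : (sphDegDiff G w v - sphDegDiff G w u) / (D + 1) ≤ -(2 * D / L) / (D + 1) := by
    rw [sub_div, neg_div, div_div]
    linarith
  linarith [(div_le_div_iff_of_pos_right hD1).1 hdrop]

lemma sphDegDiff_self (hconn : G.Connected) (hreg : G.IsRegularOfDegree D) (w : V) :
    sphDegDiff G w w = D := by
  have hminus : univ.filter (fun v => G.Adj w v ∧ G.dist w v = 0) = ∅ :=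
    filter_false_of_mem fun v _ ⟨hadj, h⟩ => hadj.ne (hconn.dist_eq_zero_iff.1 h)
  have hplus : univ.filter (fun v => G.Adj w v ∧ G.dist w v = 1) = G.neighborFinset w := by
    ext v; simp
  rw [sphDegDiff, sphDeg, sphDeg, G.dist_self, zero_add, Nat.zero_sub, hminus, hplus, card_empty,
    G.card_neighborFinset_eq_degree, hreg w]
  simp

lemma sphDegDiff_le (hconn : G.Connected) (hreg : G.IsRegularOfDegree D) (hD : 0 < D)
    (hBM : BMSharp G D L) (w v : V) :
    sphDegDiff G w v ≤ D * (1 - 2 * G.dist w v / L) := by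
  induction h : G.dist w v generalizing v with
  | zero => rw [← hconn.dist_eq_zero_iff.1 h, sphDegDiff_self hconn hreg]; simp
  | succ m ih =>
    obtain ⟨u, hadj, hu⟩ := exists_adj_dist_eq_of_dist_eq_succ hconn h
    have hstep := sphDegDiff_le_sub_of_adj hconn hreg hD hBM w hadj (by rw [h, hu])
    have hu_le := ih u hu
    push_cast
    linarith [show (D : ℝ) * (1 - 2 * (m + 1) / L) = D * (1 - 2 * m / L) - 2 * D / L by ring]

/-- Both sums count the edges `v ~ u` with `d(w, u) = d(w, v) + 1`. -/
lemma sum_sphDegDiff (hconn : G.Connected) (w : V) : ∑ v, sphDegDiff G w v = 0 := by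
  have key : ∑ v, sphDeg G w v (G.dist w v + 1) = ∑ v, sphDeg G w v (G.dist w v - 1) := by
    simp only [sphDeg, card_filter]
    rw [sum_comm]
    refine sum_congr rfl fun a _ => sum_congr rfl fun b _ => if_congr ?_ rfl rfl
    refine ⟨fun ⟨hab, h⟩ => ⟨hab.symm, by omega⟩, fun ⟨hab, h⟩ => ⟨hab.symm, ?_⟩⟩
    have ha : G.dist w a ≠ 0 := fun h0 => hab.ne <|
      (hconn.dist_eq_zero_iff.1 h0).symm.trans (hconn.dist_eq_zero_iff.1 (by omega))
    omega
  simp only [sphDegDiff, sum_sub_distrib, sub_eq_zero]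
  exact_mod_cast key

lemma sum_add_sum_le_zero_of_dist_eq (hconn : G.Connected) (hL : 0 < L) {x p : V}
    (hp : G.dist x p = L) :
    ∑ v, (D * (1 - 2 * G.dist x v / L) + D * (1 - 2 * G.dist p v / L) : ℝ) ≤ 0 := by
  refine sum_nonpos fun v _ => ?_
  have htri : (L : ℝ) ≤ G.dist x v + G.dist p v := by
    rw [← hp, G.dist_comm (u := p)]
    exact_mod_cast hconn.dist_triangle
  have hL' : (0 : ℝ) < L := by exact_mod_cast hL
  have : (2 : ℝ) ≤ 2 * G.dist x v / L + 2 * G.dist p v / L := by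
    rw [← add_div, le_div_iff₀ hL']
    linarith
  nlinarith [(D.cast_nonneg : (0 : ℝ) ≤ D)]

end

theorem stmt_general [Fintype V] (G : SimpleGraph V) (hconn : G.Connected)
    (D L : ℕ) (hD : 0 < D) (hL : 0 < L) (hreg : G.IsRegularOfDegree D)
    (hBM : BMSharp G D L)
    (x0 : V) (hpole : ∃ p, G.dist x0 p = L)
    (y : V) (k : ℕ) (hk : G.dist x0 y = k) :
    (sphDeg G x0 y (k + 1) : ℝ) - (sphDeg G x0 y (k - 1) : ℝ)
      = D * (1 - 2 * k / L) := by
  obtain ⟨p, hp⟩ := hpole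
  set slack : V → V → ℝ := fun w v => D * (1 - 2 * G.dist w v / L) - sphDegDiff G w v
  have hslack : ∀ w, 0 ≤ slack w := fun w v =>
    sub_nonneg.2 (sphDegDiff_le hconn hreg hD hBM w v)
  have hsum : ∀ w, ∑ v, slack w v = ∑ v, (D * (1 - 2 * G.dist w v / L) : ℝ) := fun w => by
    simp only [slack, sum_sub_distrib, sum_sphDegDiff hconn, sub_zero]
  have hx0 : ∑ v, slack x0 v = 0 := by
    have := sum_add_sum_le_zero_of_dist_eq (D := D) hconn hL hp
    rw [sum_add_distrib, ← hsum, ← hsum] at this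
    linarith [Fintype.sum_nonneg (hslack x0), Fintype.sum_nonneg (hslack p)]
  have hy := congrFun ((Fintype.sum_eq_zero_iff_of_nonneg (hslack x0)).1 hx0) y
  simp only [slack, sphDegDiff, hk, Pi.zero_apply, sub_eq_zero] at hy
  exact hy.symm

theorem stmt [Fintype V] (G : SimpleGraph V) (hconn : G.Connected)
    (D L : ℕ) (hD : 0 < D) (hL : 0 < L) (hreg : G.IsRegularOfDegree D)
    (hdiam : G.diam = L) (hBM : BMSharp G D L)
    (x0 : V) (hpole : ∃ p, G.dist x0 p = L)
    (y : V) (k : ℕ) (hk : G.dist x0 y = k) :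
    (sphDeg G x0 y (k + 1) : ℝ) - (sphDeg G x0 y (k - 1) : ℝ)
      = D * (1 - 2 * k / L) :=
  stmt_general G hconn D L hD hL hreg hBM x0 hpole y k hk

end BMS
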